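/- arXiv:2012.12889 — 3 statements merged into one kernel-verified Lean document; each statement's English description precedes it below -/
import Mathlib

section
/- Let f be a Herglotz function (analytic map from ℂ₊ to the closed upper half-plane) with representation f(z) = αz + β + ∫ (1/(t-z) - t/(1+t²)) dμ(t). If Im f(iy) = y + O(1/y) as y → ∞, then α = 1, μ(ℝ) < ∞, and lim_{y→∞} y(Im f(iy) - y) = μ(ℝ). -/
open Filter MeasureTheory Complex Topology

/-!
On the imaginary axis the representation gives
`y (Im f(iy) - y) = (α - 1) y² + ∫ y² / (t² + y²) dμ(t)`, and the hypothesis says this is bounded.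
Since `∫ dμ(t) / (t² + y²) → 0` by dominated convergence, the integral is `o(y²)`, which forces
`α = 1`. The integrand `y² / (t² + y²)` increases to `1`, so by Fatou's lemma `μ(ℝ)` is at most
the bound; once `μ` is finite, the integral converges to `μ(ℝ)`.
-/

noncomputable def herglotzKernel (z : ℂ) (t : ℝ) : ℂ :=
  1 / ((t : ℂ) - z) - (t : ℂ) / (1 + (t : ℂ) ^ 2)

def HasHerglotzRep (f : ℂ → ℂ) (α β : ℝ) (μ : Measure ℝ) : Prop :=
  ∀ z : ℂ, 0 < z.im → f z = (α : ℂ) * z + (β : ℂ) + ∫ t : ℝ, herglotzKernel z t ∂μ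

section Kernel

variable {z : ℂ}

lemma ofReal_sub_ne_zero_of_im_pos (hz : 0 < z.im) (t : ℝ) : (t : ℂ) - z ≠ 0 := by
  intro h
  simpa [hz.ne'] using congrArg Complex.im h

lemma herglotzKernel_eq_mul (hz : 0 < z.im) (t : ℝ) :
    herglotzKernel z t = (z + (1 + z ^ 2) / ((t : ℂ) - z)) * ((1 / (1 + t ^ 2) : ℝ) : ℂ) := by
  have h1 : (1 : ℂ) + (t : ℂ) ^ 2 ≠ 0 := by exact_mod_cast (by positivity : (1 : ℝ) + t ^ 2 ≠ 0)
  have h2 := ofReal_sub_ne_zero_of_im_pos hz t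
  unfold herglotzKernel
  push_cast
  field_simp
  ring

lemma norm_add_div_ofReal_sub_le (hz : 0 < z.im) (t : ℝ) :
    ‖z + (1 + z ^ 2) / ((t : ℂ) - z)‖ ≤ ‖z‖ + ‖1 + z ^ 2‖ / z.im := by
  have him : z.im ≤ ‖(t : ℂ) - z‖ := by
    simpa using (abs_im_le_norm ((t : ℂ) - z)).trans' (neg_le_abs _)
  refine (norm_add_le _ _).trans (add_le_add_right ?_ _)
  rw [norm_div]
  exact div_le_div_of_nonneg_left (norm_nonneg _) hz him

lemma integrable_herglotzKernel {μ : Measure ℝ}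
    (hint : Integrable (fun t : ℝ => 1 / (1 + t ^ 2)) μ) (hz : 0 < z.im) :
    Integrable (herglotzKernel z) μ := by
  have hcont : Continuous fun t : ℝ => z + (1 + z ^ 2) / ((t : ℂ) - z) :=
    continuous_const.add (continuous_const.div (by fun_prop) (ofReal_sub_ne_zero_of_im_pos hz))
  rw [funext (herglotzKernel_eq_mul hz)]
  exact hint.ofReal.bdd_mul hcont.aestronglyMeasurable
    (.of_forall (norm_add_div_ofReal_sub_le hz))

lemma herglotzKernel_im (t : ℝ) : (herglotzKernel z t).im = z.im / normSq ((t : ℂ) - z) := by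
  have : (t : ℂ) / (1 + (t : ℂ) ^ 2) = ((t / (1 + t ^ 2) : ℝ) : ℂ) := by push_cast; rfl
  rw [herglotzKernel, sub_im, this, ofReal_im, sub_zero, div_im]
  simp [neg_div]

end Kernel

section PoissonIntegral

lemma tendsto_one_div_sq_add_sq_atTop (t : ℝ) :
    Tendsto (fun y : ℝ => 1 / (t ^ 2 + y ^ 2)) atTop (𝓝 0) := by
  simp only [one_div]
  exact (tendsto_atTop_add_const_left _ _ (tendsto_pow_atTop two_ne_zero)).inv_tendsto_atTop

lemma tendsto_sq_div_sq_add_sq_atTop (t : ℝ) :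
    Tendsto (fun y : ℝ => y ^ 2 / (t ^ 2 + y ^ 2)) atTop (𝓝 1) := by
  have h := ((tendsto_one_div_sq_add_sq_atTop t).const_mul (t ^ 2)).const_sub 1
  rw [mul_zero, sub_zero] at h
  refine h.congr' ((eventually_ne_atTop 0).mono fun y hy => ?_)
  field_simp
  ring

variable {μ : Measure ℝ}

lemma integrable_sq_div_sq_add_sq (hint : Integrable (fun t : ℝ => 1 / (1 + t ^ 2)) μ) (y : ℝ) :
    Integrable (fun t : ℝ => y ^ 2 / (t ^ 2 + y ^ 2)) μ := by
  refine (hint.const_mul (1 + y ^ 2)).mono' (Measurable.aestronglyMeasurable (by fun_prop))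
    (.of_forall fun t => ?_)
  rw [Real.norm_of_nonneg (by positivity), mul_one_div]
  rcases eq_or_ne y 0 with rfl | hy
  · simp only [ne_eq, OfNat.ofNat_ne_zero, not_false_eq_true, zero_pow, zero_div]
    positivity
  · rw [div_le_div_iff₀ (by positivity) (by positivity)]
    nlinarith [sq_nonneg t, sq_nonneg y, mul_nonneg (sq_nonneg t) (sq_nonneg y)]

lemma integral_sq_div_sq_add_sq (y : ℝ) :
    ∫ t, y ^ 2 / (t ^ 2 + y ^ 2) ∂μ = y ^ 2 * ∫ t, 1 / (t ^ 2 + y ^ 2) ∂μ := by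
  rw [← integral_const_mul]
  simp only [mul_one_div]

lemma tendsto_integral_one_div_sq_add_sq_atTop
    (hint : Integrable (fun t : ℝ => 1 / (1 + t ^ 2)) μ) :
    Tendsto (fun y : ℝ => ∫ t, 1 / (t ^ 2 + y ^ 2) ∂μ) atTop (𝓝 0) := by
  simpa using tendsto_integral_filter_of_dominated_convergence _
    (.of_forall fun y => Measurable.aestronglyMeasurable (by fun_prop))
    ((eventually_ge_atTop 1).mono fun y (hy : (1 : ℝ) ≤ y) => .of_forall fun t => by
      rw [Real.norm_of_nonneg (by positivity)]
      exact one_div_le_one_div_of_le (by positivity) (by nlinarith))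
    hint (.of_forall tendsto_one_div_sq_add_sq_atTop)

lemma tendsto_lintegral_sq_div_sq_add_sq_atTop (μ : Measure ℝ) :
    Tendsto (fun y : ℝ => ∫⁻ t, ENNReal.ofReal (y ^ 2 / (t ^ 2 + y ^ 2)) ∂μ) atTop
      (𝓝 (μ Set.univ)) := by
  refine tendsto_of_le_liminf_of_limsup_le ?_ ?_
  · calc μ Set.univ
        = ∫⁻ t, liminf (fun y : ℝ => ENNReal.ofReal (y ^ 2 / (t ^ 2 + y ^ 2))) atTop ∂μ := by
          rw [← lintegral_one]
          congr 1 with t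
          rw [(ENNReal.tendsto_ofReal (tendsto_sq_div_sq_add_sq_atTop t)).liminf_eq,
            ENNReal.ofReal_one]
      _ ≤ _ := lintegral_liminf_le' fun y => by fun_prop
  · refine limsup_le_of_le (by isBoundedDefault) (.of_forall fun y => ?_)
    rw [← lintegral_one]
    refine lintegral_mono fun t => ENNReal.ofReal_le_one.mpr ?_
    exact div_le_one_of_le₀ (by nlinarith [sq_nonneg t]) (by positivity)

lemma eq_zero_of_abs_mul_sq_add_integral_le (hint : Integrable (fun t : ℝ => 1 / (1 + t ^ 2)) μ)
    {a C : ℝ} (h : ∀ᶠ y in atTop, |a * y ^ 2 + ∫ t, y ^ 2 / (t ^ 2 + y ^ 2) ∂μ| ≤ C) :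
    a = 0 := by
  have hlim : Tendsto (fun y : ℝ => a + ∫ t, 1 / (t ^ 2 + y ^ 2) ∂μ) atTop (𝓝 a) := by
    simpa using (tendsto_integral_one_div_sq_add_sq_atTop hint).const_add a
  have hzero : Tendsto (fun y : ℝ => a + ∫ t, 1 / (t ^ 2 + y ^ 2) ∂μ) atTop (𝓝 0) := by
    refine squeeze_zero_norm' ?_
      ((tendsto_const_nhds (x := C)).div_atTop (tendsto_pow_atTop two_ne_zero))
    filter_upwards [h, eventually_gt_atTop 0] with y hy hy0
    rw [integral_sq_div_sq_add_sq, mul_comm a, ← mul_add, abs_mul, abs_of_pos (by positivity)]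
      at hy
    rw [Real.norm_eq_abs, le_div_iff₀ (by positivity), mul_comm]
    exact hy
  exact tendsto_nhds_unique hlim hzero

lemma measure_univ_le_of_integral_sq_div_sq_add_sq_le
    (hint : Integrable (fun t : ℝ => 1 / (1 + t ^ 2)) μ) {C : ℝ}
    (h : ∀ᶠ y in atTop, ∫ t, y ^ 2 / (t ^ 2 + y ^ 2) ∂μ ≤ C) :
    μ Set.univ ≤ ENNReal.ofReal C := by
  refine le_of_tendsto (tendsto_lintegral_sq_div_sq_add_sq_atTop μ) (h.mono fun y hy => ?_)
  rw [← ofReal_integral_eq_lintegral_ofReal (integrable_sq_div_sq_add_sq hint y)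
    (.of_forall fun t => by positivity)]
  exact ENNReal.ofReal_le_ofReal hy

lemma tendsto_integral_sq_div_sq_add_sq_atTop [IsFiniteMeasure μ] :
    Tendsto (fun y : ℝ => ∫ t, y ^ 2 / (t ^ 2 + y ^ 2) ∂μ) atTop (𝓝 (μ.real Set.univ)) := by
  have h := (ENNReal.tendsto_toReal (measure_ne_top μ Set.univ)).comp
    (tendsto_lintegral_sq_div_sq_add_sq_atTop μ)
  refine h.congr fun y => (integral_eq_lintegral_of_nonneg_ae (.of_forall fun t => ?_)
    (Measurable.aestronglyMeasurable (by fun_prop))).symm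
  positivity

end PoissonIntegral

namespace HasHerglotzRep

variable {f : ℂ → ℂ} {α β : ℝ} {μ : Measure ℝ}

lemma im_eq (hrep : HasHerglotzRep f α β μ)
    (hint : Integrable (fun t : ℝ => 1 / (1 + t ^ 2)) μ) {z : ℂ} (hz : 0 < z.im) :
    (f z).im = α * z.im + ∫ t, z.im / normSq ((t : ℂ) - z) ∂μ := by
  have him : (∫ t, herglotzKernel z t ∂μ).im = ∫ t, z.im / normSq ((t : ℂ) - z) ∂μ := by
    simp_rw [← herglotzKernel_im]
    exact (integral_im (integrable_herglotzKernel hint hz)).symm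
  rw [hrep z hz, add_im, him]
  simp

lemma mul_im_I_mul_sub_eq (hrep : HasHerglotzRep f α β μ)
    (hint : Integrable (fun t : ℝ => 1 / (1 + t ^ 2)) μ) {y : ℝ} (hy : 0 < y) :
    y * ((f (I * y)).im - y) = (α - 1) * y ^ 2 + ∫ t, y ^ 2 / (t ^ 2 + y ^ 2) ∂μ := by
  have hIy : (I * (y : ℂ)).im = y := by simp
  have hnormSq (t : ℝ) : normSq ((t : ℂ) - I * y) = t ^ 2 + y ^ 2 := by
    simp [normSq_apply, sq]
  rw [hrep.im_eq hint (hIy.symm ▸ hy)]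
  simp only [hIy, hnormSq]
  have : ∫ t, y ^ 2 / (t ^ 2 + y ^ 2) ∂μ = y * ∫ t, y / (t ^ 2 + y ^ 2) ∂μ := by
    rw [← integral_const_mul]
    congr 1 with t
    ring
  rw [this]
  ring

end HasHerglotzRep

theorem herglotz_two_term_general (f : ℂ → ℂ) (α β : ℝ) (μ : Measure ℝ)
    (hint : Integrable (fun t : ℝ => 1 / (1 + t ^ 2)) μ)
    (hrep : ∀ z : ℂ, 0 < z.im →
      f z = (α : ℂ) * z + (β : ℂ) +
        ∫ t : ℝ, (1 / ((t : ℂ) - z) - (t : ℂ) / (1 + (t : ℂ) ^ 2)) ∂μ)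
    (hasymp : ∃ C y₀ : ℝ, ∀ y : ℝ, y₀ ≤ y → |(f (Complex.I * y)).im - y| ≤ C / y) :
    α = 1 ∧ μ Set.univ < ⊤ ∧
      Tendsto (fun y : ℝ => y * ((f (Complex.I * y)).im - y)) atTop
        (nhds (μ Set.univ).toReal) := by
  obtain ⟨C, y₀, hC⟩ := hasymp
  have hQ : ∀ᶠ y : ℝ in atTop, y * ((f (I * y)).im - y) =
      (α - 1) * y ^ 2 + ∫ t, y ^ 2 / (t ^ 2 + y ^ 2) ∂μ :=
    (eventually_gt_atTop 0).mono fun y hy => HasHerglotzRep.mul_im_I_mul_sub_eq hrep hint hy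
  have hbound : ∀ᶠ y : ℝ in atTop, |y * ((f (I * y)).im - y)| ≤ C := by
    filter_upwards [eventually_ge_atTop y₀, eventually_gt_atTop 0] with y hy₀ hy
    rw [abs_mul, abs_of_pos hy, ← mul_div_cancel₀ C hy.ne']
    exact mul_le_mul_of_nonneg_left (hC y hy₀) hy.le
  obtain rfl : α = 1 := sub_eq_zero.mp <| eq_zero_of_abs_mul_sq_add_integral_le hint <|
    (hbound.and hQ).mono fun y ⟨hb, hq⟩ => hq ▸ hb
  have hP : ∀ᶠ y : ℝ in atTop, y * ((f (I * y)).im - y) = ∫ t, y ^ 2 / (t ^ 2 + y ^ 2) ∂μ :=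
    hQ.mono fun y hy => by simpa using hy
  have hfin : μ Set.univ < ⊤ :=
    (measure_univ_le_of_integral_sq_div_sq_add_sq_le hint <| (hbound.and hP).mono
      fun y ⟨hb, hp⟩ => hp ▸ (le_abs_self _).trans hb).trans_lt ENNReal.ofReal_lt_top
  have : IsFiniteMeasure μ := ⟨hfin⟩
  exact ⟨rfl, hfin, tendsto_integral_sq_div_sq_add_sq_atTop.congr' (hP.mono fun y hy => hy.symm)⟩

/-- Let `f` be a Herglotz function with representation
`f(z) = αz + β + ∫ (1/(t-z) - t/(1+t²)) dμ(t)` where `μ` is a positive measure on `ℝ`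
with `∫ dμ(t)/(1+t²) < ∞`.  If `Im f(iy) = y + O(1/y)` as `y → ∞`, then `α = 1`,
`μ(ℝ) < ∞`, and `lim_{y→∞} y (Im f(iy) - y) = μ(ℝ)`. -/
theorem herglotz_two_term (f : ℂ → ℂ) (α β : ℝ) (μ : Measure ℝ)
    (hanal : DifferentiableOn ℂ f {z : ℂ | 0 < z.im})
    (hherglotz : ∀ z : ℂ, 0 < z.im → 0 ≤ (f z).im)
    (hint : Integrable (fun t : ℝ => 1 / (1 + t ^ 2)) μ)
    (hrep : ∀ z : ℂ, 0 < z.im →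
      f z = (α : ℂ) * z + (β : ℂ) +
        ∫ t : ℝ, (1 / ((t : ℂ) - z) - (t : ℂ) / (1 + (t : ℂ) ^ 2)) ∂μ)
    (hasymp : ∃ C y₀ : ℝ, ∀ y : ℝ, y₀ ≤ y → |(f (Complex.I * y)).im - y| ≤ C / y) :
    α = 1 ∧ μ Set.univ < ⊤ ∧
      Tendsto (fun y : ℝ => y * ((f (Complex.I * y)).im - y)) atTop
        (nhds (μ Set.univ).toReal) :=
  herglotz_two_term_general f α β μ hint hrep hasymp
end

section
/- Let U and V be linearly independent eigensolutions of a Dirac equation at the same energy z, with nonvanishing components u₁ and v₂ respectively, such that u₂/u₁ and v₁/v₂ both take values in the closed unit disk. If |1 - (u₂v₁)/(u₁v₂)| ≥ δ > 0 at a point x, then (1/2)|W| ≤ |u₁(x) v₂(x)| ≤ |W|/δ, where W = W(U,V) is the (constant, nonzero) Wronskian U^t J V with J = [[0,i],[-i,0]]. -/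
/-- Pointwise Wronskian bounds: if `u₂/u₁` and `v₁/v₂` lie in the closed unit disk,
the Wronskian `W = i(u₁v₂ - u₂v₁)` is nonzero, and `|1 - u₂v₁/(u₁v₂)| ≥ δ > 0`,
then `|W|/2 ≤ |u₁ v₂| ≤ |W|/δ`. -/
theorem wronskian_product_bounds (u₁ u₂ v₁ v₂ W : ℂ) (δ : ℝ)
    (hu₁ : u₁ ≠ 0) (hv₂ : v₂ ≠ 0)
    (hudisk : ‖u₂ / u₁‖ ≤ 1) (hvdisk : ‖v₁ / v₂‖ ≤ 1)
    (hW : W = Complex.I * (u₁ * v₂ - u₂ * v₁)) (hWne : W ≠ 0)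
    (hδ : 0 < δ) (hsep : δ ≤ ‖1 - (u₂ * v₁) / (u₁ * v₂)‖) :
    ‖W‖ / 2 ≤ ‖u₁ * v₂‖ ∧ ‖u₁ * v₂‖ ≤ ‖W‖ / δ := by
  have hp : u₁ * v₂ ≠ 0 := mul_ne_zero hu₁ hv₂
  set r : ℂ := (u₂ * v₁) / (u₁ * v₂) with hr
  have hWfac : W = Complex.I * ((u₁ * v₂) * (1 - r)) := by
    rw [hW, hr]; field_simp
  have hnormW : ‖W‖ = ‖u₁ * v₂‖ * ‖1 - r‖ := by
    rw [hWfac, norm_mul, norm_mul, Complex.norm_I, one_mul]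
  have hrle : ‖r‖ ≤ 1 := by
    have : r = (u₂ / u₁) * (v₁ / v₂) := by rw [hr]; field_simp
    rw [this, norm_mul]
    exact mul_le_one₀ hudisk (norm_nonneg _) hvdisk
  have h2 : ‖1 - r‖ ≤ 2 := by
    calc ‖1 - r‖ ≤ ‖(1:ℂ)‖ + ‖r‖ := norm_sub_le _ _
    _ ≤ 1 + 1 := by rw [norm_one]; linarith
    _ = 2 := by norm_num
  have hpos : (0:ℝ) < ‖u₁ * v₂‖ := norm_pos_iff.mpr hp
  constructor
  · rw [div_le_iff₀ (by norm_num : (0:ℝ) < 2), hnormW]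
    exact mul_le_mul_of_nonneg_left h2 (le_of_lt hpos)
  · rw [le_div_iff₀ hδ, hnormW]
    calc ‖u₁ * v₂‖ * δ ≤ ‖u₁ * v₂‖ * ‖1 - r‖ :=
      mul_le_mul_of_nonneg_left hsep (le_of_lt hpos)
    _ = ‖u₁ * v₂‖ * ‖1 - r‖ := rfl
end

section
/- Let S be a nonempty set of positive finite Borel measures on ℝ which is sequentially compact in the vague topology (every sequence in S has a vaguely convergent subsequence with limit in S) and uniformly bounded in total mass. Then inf_{σ ∈ S} σ(ℝ) = sup_{L > 0} inf_{σ ∈ S} σ((-L,L)). -/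
open MeasureTheory Filter
open scoped ENNReal

/-- `μₙ → μ` vaguely: convergence of integrals of all continuous functions
vanishing at infinity. -/
def VagueTendsto (μs : ℕ → Measure ℝ) (μ : Measure ℝ) : Prop :=
  ∀ f : ℝ → ℝ, Continuous f → Tendsto f (cocompact ℝ) (nhds 0) →
    Tendsto (fun n => ∫ t, f t ∂(μs n)) atTop (nhds (∫ t, f t ∂μ))

/-!
Restricting to `(-L, L)` can only lower the infimum, so the supremum is at most the infimum of
the total masses. Conversely, if the supremum is below `c`, pick `σₙ ∈ S` with
`σₙ(-(n+1), n+1) < c` and pass to a vague limit `μ ∈ S`. Testing against Urysohn functions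
between `[-m, m]` and `[-(m+1), m+1]` gives `μ[-m, m] ≤ c` for every `m`, hence `μ(ℝ) ≤ c`.
-/

open Set Topology

namespace VagueTendsto

variable {σs : ℕ → Measure ℝ} {μ : Measure ℝ}

theorem measureReal_le_of_eventually_le [∀ n, IsFiniteMeasureOnCompacts (σs n)]
    [IsFiniteMeasureOnCompacts μ] (h : VagueTendsto σs μ) {K L : Set ℝ} (hK : IsCompact K)
    (hL : IsCompact L) (hKL : K ⊆ interior L) {c : ℝ}
    (hc : ∀ᶠ n in atTop, (σs n).real L ≤ c) : μ.real K ≤ c := by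
  obtain ⟨f, hfK, hfL, hf_supp, hf01⟩ := exists_continuous_one_zero_of_isCompact hK
    isOpen_interior.isClosed_compl (disjoint_compl_right_iff_subset.mpr hKL)
  have hf_int (ν : Measure ℝ) [IsFiniteMeasureOnCompacts ν] : Integrable f ν :=
    f.continuous.integrable_of_hasCompactSupport hf_supp
  have h_lower : μ.real K ≤ ∫ t, f t ∂μ := by
    rw [← integral_indicator_one hK.measurableSet]
    refine integral_mono ((integrableOn_const hK.measure_ne_top).integrable_indicator
      hK.measurableSet) (hf_int μ) fun x => ?_
    by_cases hx : x ∈ K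
    · simp [indicator_of_mem hx, hfK hx]
    · simpa [indicator_of_notMem hx] using (hf01 x).1
  have h_upper (n : ℕ) : ∫ t, f t ∂σs n ≤ (σs n).real L := by
    rw [← integral_indicator_one hL.measurableSet]
    refine integral_mono (hf_int _) ((integrableOn_const hL.measure_ne_top).integrable_indicator
      hL.measurableSet) fun x => ?_
    by_cases hx : x ∈ interior L
    · simpa [indicator_of_mem (interior_subset hx)] using (hf01 x).2
    · simp [hfL hx, indicator_nonneg]
  exact h_lower.trans <| le_of_tendsto (h f f.continuous hf_supp.is_zero_at_infty)
    (hc.mono fun n hn => (h_upper n).trans hn)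

theorem measureReal_univ_le [∀ n, IsFiniteMeasureOnCompacts (σs n)] [IsFiniteMeasure μ]
    (h : VagueTendsto σs μ) {c : ℝ}
    (hc : ∀ R : ℝ, ∀ᶠ n in atTop, (σs n).real (Metric.closedBall 0 R) ≤ c) :
    μ.real univ ≤ c := by
  have h_mono : Monotone fun m : ℕ => Metric.closedBall (0 : ℝ) m :=
    fun _ _ hmk => Metric.closedBall_subset_closedBall (Nat.cast_le.mpr hmk)
  have h_lim : Tendsto (fun m : ℕ => μ.real (Metric.closedBall 0 m)) atTop (𝓝 (μ.real univ)) := by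
    have := tendsto_measure_iUnion_atTop (μ := μ) h_mono
    rw [Metric.iUnion_closedBall_nat] at this
    exact (ENNReal.tendsto_toReal (measure_ne_top μ _)).comp this
  refine le_of_tendsto' h_lim fun m => h.measureReal_le_of_eventually_le (isCompact_closedBall _ _)
    (isCompact_closedBall _ _) ?_ (hc (m + 1))
  exact (Metric.closedBall_subset_ball (lt_add_one _)).trans Metric.ball_subset_interior_closedBall

end VagueTendsto

namespace MeasureTheory

variable {α : Type*} [MeasurableSpace α] {S : Set (Measure α)} {s t : Set α}

noncomputable def sInfMeasureReal (S : Set (Measure α)) (s : Set α) : ℝ :=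
  sInf ((fun σ : Measure α => σ.real s) '' S)

theorem bddBelow_image_measureReal (S : Set (Measure α)) (s : Set α) :
    BddBelow ((fun σ : Measure α => σ.real s) '' S) :=
  ⟨0, by rintro _ ⟨σ, -, rfl⟩; exact measureReal_nonneg⟩

theorem sInfMeasureReal_le {σ : Measure α} (hσ : σ ∈ S) : sInfMeasureReal S s ≤ σ.real s :=
  csInf_le (bddBelow_image_measureReal S s) ⟨σ, hσ, rfl⟩

theorem sInfMeasureReal_mono (hne : S.Nonempty) (hfin : ∀ σ ∈ S, IsFiniteMeasure σ)
    (hst : s ⊆ t) : sInfMeasureReal S s ≤ sInfMeasureReal S t := by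
  refine le_csInf (hne.image _) ?_
  rintro _ ⟨σ, hσ, rfl⟩
  have := hfin σ hσ
  exact (sInfMeasureReal_le hσ).trans (measureReal_mono hst)

theorem exists_measureReal_lt_of_sInfMeasureReal_lt (hne : S.Nonempty) {c : ℝ}
    (h : sInfMeasureReal S s < c) : ∃ σ ∈ S, σ.real s < c := by
  simpa using exists_lt_of_csInf_lt (hne.image _) h

end MeasureTheory

theorem exists_mem_measureReal_univ_le_of_vagueCompact {S : Set (Measure ℝ)}
    (hfin : ∀ σ ∈ S, IsFiniteMeasure σ)
    (hcpt : ∀ σs : ℕ → Measure ℝ, (∀ n, σs n ∈ S) →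
      ∃ μ ∈ S, ∃ g : ℕ → ℕ, StrictMono g ∧ VagueTendsto (fun n => σs (g n)) μ)
    {c : ℝ} (hc : ∀ n : ℕ, ∃ σ ∈ S, σ.real (Ioo (-(n + 1 : ℝ)) (n + 1)) < c) :
    ∃ μ ∈ S, μ.real univ ≤ c := by
  choose σs hσs_mem hσs_lt using hc
  obtain ⟨μ, hμ, g, hg, hconv⟩ := hcpt σs hσs_mem
  have := hfin μ hμ
  have (n : ℕ) : IsFiniteMeasure (σs (g n)) := hfin _ (hσs_mem _)
  refine ⟨μ, hμ, hconv.measureReal_univ_le fun R => ?_⟩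
  filter_upwards [(tendsto_natCast_atTop_atTop.comp hg.tendsto_atTop).eventually_gt_atTop R]
    with n (hn : R < g n)
  refine (measureReal_mono ?_).trans (hσs_lt (g n)).le
  rw [Real.closedBall_zero_eq_Icc]
  exact Icc_subset_Ioo (by linarith) (by linarith)

theorem inf_mass_eq_sup_inf_interval_general (S : Set (Measure ℝ))
    (hne : S.Nonempty)
    (hfin : ∀ σ ∈ S, IsFiniteMeasure σ)
    (hcpt : ∀ σs : ℕ → Measure ℝ, (∀ n, σs n ∈ S) →
      ∃ μ ∈ S, ∃ g : ℕ → ℕ, StrictMono g ∧ VagueTendsto (fun n => σs (g n)) μ) :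
    sInf ((fun σ : Measure ℝ => (σ Set.univ).toReal) '' S) =
      sSup {r : ℝ | ∃ L : ℝ, 0 < L ∧
        r = sInf ((fun σ : Measure ℝ => (σ (Set.Ioo (-L) L)).toReal) '' S)} := by
  change sInfMeasureReal S univ =
    sSup {r : ℝ | ∃ L : ℝ, 0 < L ∧ r = sInfMeasureReal S (Ioo (-L) L)}
  have h_le_univ (L : ℝ) : sInfMeasureReal S (Ioo (-L) L) ≤ sInfMeasureReal S univ :=
    sInfMeasureReal_mono hne hfin (subset_univ _)
  have h_bddAbove : BddAbove {r : ℝ | ∃ L : ℝ, 0 < L ∧ r = sInfMeasureReal S (Ioo (-L) L)} :=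
    ⟨_, by rintro _ ⟨L, -, rfl⟩; exact h_le_univ L⟩
  refine le_antisymm (le_of_forall_gt_imp_ge_of_dense fun c hc => ?_)
    (csSup_le ⟨_, 1, one_pos, rfl⟩ (by rintro _ ⟨L, -, rfl⟩; exact h_le_univ L))
  obtain ⟨μ, hμ, hμc⟩ := exists_mem_measureReal_univ_le_of_vagueCompact hfin hcpt fun n =>
    exists_measureReal_lt_of_sInfMeasureReal_lt hne <|
      (le_csSup h_bddAbove ⟨(n + 1 : ℝ), by positivity, rfl⟩).trans_lt hc
  exact (sInfMeasureReal_le hμ).trans hμc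

/-- If `S` is a nonempty, vaguely sequentially compact, uniformly mass-bounded
set of finite measures on `ℝ`, then
`inf_{σ ∈ S} σ(ℝ) = sup_{L > 0} inf_{σ ∈ S} σ((-L,L))`. -/
theorem inf_mass_eq_sup_inf_interval (S : Set (Measure ℝ))
    (hne : S.Nonempty)
    (hfin : ∀ σ ∈ S, IsFiniteMeasure σ)
    (hbdd : ∃ C : ℝ≥0∞, C < ⊤ ∧ ∀ σ ∈ S, σ Set.univ ≤ C)
    (hcpt : ∀ σs : ℕ → Measure ℝ, (∀ n, σs n ∈ S) →
      ∃ μ ∈ S, ∃ g : ℕ → ℕ, StrictMono g ∧ VagueTendsto (fun n => σs (g n)) μ) :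
    sInf ((fun σ : Measure ℝ => (σ Set.univ).toReal) '' S) =
      sSup {r : ℝ | ∃ L : ℝ, 0 < L ∧
        r = sInf ((fun σ : Measure ℝ => (σ (Set.Ioo (-L) L)).toReal) '' S)} :=
  inf_mass_eq_sup_inf_interval_general S hne hfin hcpt
end
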